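/- arXiv:math/9804072 — 5 statements merged into one kernel-verified Lean document; each statement's English description precedes it below -/
import Mathlib

section
/- Let P be any class of groups and let G₁ and G₂ be groups with subgroups H₁ ≤ G₁ and H₂ ≤ G₂. Assume G₁, G₂, and G₁ × G₂ all belong to P. Then the dominion of H₁ × H₂ in G₁ × G₂ in the class P equals dom_{G₁}^P(H₁) × dom_{G₂}^P(H₂). -/
universe u v

/-- The dominion of a subgroup `H` of `G` in the class of groups `P`:
the set of all `a ∈ G` such that every pair of homomorphisms from `G` into a
group of the class `P` agreeing on `H` also agrees on `a`. -/
def dominion {G : Type v} [Group G] (P : (K : Type u) → [Group K] → Prop)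
    (H : Subgroup G) : Set G :=
  {a : G | ∀ (K : Type u) [Group K], P K → ∀ f g : G →* K,
    (∀ h ∈ H, f h = g h) → f a = g a}

/-- If `G₁`, `G₂` and `G₁ × G₂` all belong to the class `P`, then the dominion of
`H₁ × H₂` in `G₁ × G₂` is the product of the dominions of `H₁` in `G₁` and of
`H₂` in `G₂`. -/
theorem dominion_prod {G₁ : Type u} {G₂ : Type u} [Group G₁] [Group G₂]
    (P : (K : Type u) → [Group K] → Prop)
    (hG₁ : P G₁) (hG₂ : P G₂) (hG₁G₂ : P (G₁ × G₂))
    (H₁ : Subgroup G₁) (H₂ : Subgroup G₂) :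
    dominion P (H₁.prod H₂) = (dominion P H₁) ×ˢ (dominion P H₂) := by
  ext a
  constructor
  · rintro ha
    refine ⟨?_, ?_⟩
    · intro K _ hK f g hfg
      have := ha K hK (f.comp (MonoidHom.fst G₁ G₂)) (g.comp (MonoidHom.fst G₁ G₂))
        (by rintro ⟨h₁, h₂⟩ ⟨hh₁, hh₂⟩; simpa using hfg h₁ hh₁)
      simpa using this
    · intro K _ hK f g hfg
      have := ha K hK (f.comp (MonoidHom.snd G₁ G₂)) (g.comp (MonoidHom.snd G₁ G₂))
        (by rintro ⟨h₁, h₂⟩ ⟨hh₁, hh₂⟩; simpa using hfg h₂ hh₂)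
      simpa using this
  · rintro ⟨ha₁, ha₂⟩ K _ hK f g hfg
    have h1 : f (a.1, 1) = g (a.1, 1) := by
      have := ha₁ K hK (f.comp (MonoidHom.inl G₁ G₂)) (g.comp (MonoidHom.inl G₁ G₂))
        (fun h hh => hfg (h, 1) ⟨hh, H₂.one_mem⟩)
      simpa using this
    have h2 : f (1, a.2) = g (1, a.2) := by
      have := ha₂ K hK (f.comp (MonoidHom.inr G₁ G₂)) (g.comp (MonoidHom.inr G₁ G₂))
        (fun h hh => hfg (1, h) ⟨H₁.one_mem, hh⟩)
      simpa using this
    have : a = (a.1, 1) * (1, a.2) := by simp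
    rw [this, map_mul, map_mul, h1, h2]
end

section
/- Let P be a class of groups closed under quotients (images of surjective group homomorphisms). If G belongs to P and H is a subgroup of G, then dom_G^P(H) is contained in the normal closure of H in G, i.e. in the subgroup H[H,G] generated by H together with all commutators [h,g] with h ∈ H, g ∈ G. -/
universe u v

/-! The projection `G → G ⧸ N` and the trivial map agree on `H` whenever `H ≤ N`, so every element
of the dominion is killed by the projection. For `N` the normal closure of `H` the quotient lies
in a quotient-closed class together with `G`, and every conjugate `g h g⁻¹ = h ⁅h⁻¹, g⁆` lies in
`H ⁅H, G⁆`. -/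

theorem dominion_subset_of_le_normal {G : Type u} [Group G] {P : (K : Type u) → [Group K] → Prop}
    {H N : Subgroup G} [N.Normal] (hHN : H ≤ N) (hN : P (G ⧸ N)) :
    dominion P H ⊆ N := fun a ha =>
  (QuotientGroup.eq_one_iff a).mp <|
    ha (G ⧸ N) hN (QuotientGroup.mk' N) 1 fun h hh => (QuotientGroup.eq_one_iff h).mpr (hHN hh)

open scoped commutatorElement in
theorem Subgroup.normalClosure_le_sup_commutator_top {G : Type*} [Group G] (H : Subgroup G) :
    Subgroup.normalClosure (H : Set G) ≤ H ⊔ ⁅H, (⊤ : Subgroup G)⁆ := by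
  refine (Subgroup.closure_le _).mpr fun x hx => ?_
  obtain ⟨h, hh, g, hg⟩ := Group.mem_conjugatesOfSet_iff.mp hx
  have hx : x = h * ⁅h⁻¹, (g : G)⁆ := by
    rw [commutatorElement_def, eq_mul_inv_of_mul_eq hg.eq.symm]
    group
  rw [hx]
  exact mul_mem (Subgroup.mem_sup_left hh) <| Subgroup.mem_sup_right <|
    Subgroup.commutator_mem_commutator (inv_mem hh) (Subgroup.mem_top _)

/-- If the class `P` is closed under quotients (images of surjective group
homomorphisms) and `G` belongs to `P`, then the dominion of a subgroup `H` of
`G` is contained in the normal closure `H[H,G]` of `H` in `G`, the subgroup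
generated by `H` together with all commutators `[h,g]`, `h ∈ H`, `g ∈ G`. -/
theorem dominion_le_normalClosure {G : Type u} [Group G]
    (P : (K : Type u) → [Group K] → Prop)
    (hquot : ∀ (A B : Type u) [Group A] [Group B] (φ : A →* B),
      Function.Surjective φ → P A → P B)
    (hG : P G) (H : Subgroup G) :
    dominion P H ⊆ ((H ⊔ ⁅H, (⊤ : Subgroup G)⁆ : Subgroup G) : Set G) := by
  have hQ : P (G ⧸ Subgroup.normalClosure (H : Set G)) :=
    hquot _ _ (QuotientGroup.mk' _) (QuotientGroup.mk'_surjective _) hG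
  exact (dominion_subset_of_le_normal Subgroup.le_normalClosure hQ).trans
    (Subgroup.normalClosure_le_sup_commutator_top H)
end

section
/- Let P be a class of groups closed under subgroups, under quotients (images of surjective homomorphisms), and under binary direct products. Let G be a group in P, H a subgroup of G, and N a normal subgroup of G with N ⊆ H. Then the dominion of H/N in G/N in the class P equals the image of dom_G^P(H) under the canonical projection G → G/N; that is, dom_{G/N}^P(H/N) = dom_G^P(H)/N. -/
universe u v

/-!
If `f, g : G →* K` agree on `H ⊇ N`, then `(f, f)` and `(f, g) : G →* K × K` map `N` onto the same
subgroup `M`. Both land in the normalizer `S` of `M` and so induce homomorphisms `G/N →* S/M`; the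
group `S/M` lies in `P`, and the two maps agree on `H/N`. If `aN` lies in the dominion of `H/N`
they agree on `aN`, i.e. `(f a, f a)⁻¹ (f a, g a) = (f n, g n)` for some `n ∈ N`, and `f n = g n`
forces `f a = g a`. The reverse inclusion only needs composition with `G →* G/N`.
-/

open QuotientGroup Subgroup

section NormalizerQuotient

variable {G K : Type*} [Group G] [Group K] (N : Subgroup G) [N.Normal]

theorem range_le_normalizer_map (φ : G →* K) : φ.range ≤ normalizer (N.map φ : Set K) := by
  rw [MonoidHom.range_eq_map, ← normalizer_eq_top (H := N)]
  exact le_normalizer_map φ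

def quotientMapNormalizer (φ : G →* K) {M : Subgroup K} (hM : N.map φ = M) :
    G ⧸ N →* normalizer (M : Set K) ⧸ M.subgroupOf (normalizer (M : Set K)) :=
  QuotientGroup.map N _
    (φ.codRestrict _ fun g => hM ▸ range_le_normalizer_map N φ ⟨g, rfl⟩)
    fun n hn => mem_subgroupOf.2 (hM ▸ mem_map_of_mem φ hn : φ n ∈ M)

theorem quotientMapNormalizer_mk_eq_iff {φ ψ : G →* K} {M : Subgroup K}
    (hφ : N.map φ = M) (hψ : N.map ψ = M) (a b : G) :
    quotientMapNormalizer N φ hφ a = quotientMapNormalizer N ψ hψ b ↔ (φ a)⁻¹ * ψ b ∈ M :=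
  QuotientGroup.eq.trans mem_subgroupOf

end NormalizerQuotient

section Dominion

variable {P : (K : Type u) → [Group K] → Prop}

theorem image_dominion_subset {G G' : Type v} [Group G] [Group G'] (φ : G →* G')
    (H : Subgroup G) : φ '' dominion P H ⊆ dominion P (H.map φ) := by
  rintro _ ⟨a, ha, rfl⟩ K _ hK f g hfg
  exact ha K hK (f.comp φ) (g.comp φ) fun h hh => hfg _ (mem_map_of_mem φ hh)

theorem mem_dominion_of_mk_mem_dominion
    (hsub : ∀ (A : Type u) [Group A] (B : Subgroup A), P A → P B)
    (hquot : ∀ (A B : Type u) [Group A] [Group B] (φ : A →* B),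
      Function.Surjective φ → P A → P B)
    (hprod : ∀ (A B : Type u) [Group A] [Group B], P A → P B → P (A × B))
    {G : Type v} [Group G] {H N : Subgroup G} [N.Normal] (hNH : N ≤ H) {a : G}
    (ha : (a : G ⧸ N) ∈ dominion P (H.map (mk' N))) : a ∈ dominion P H := by
  intro K _ hK f g hfg
  have hfgN : N.map (f.prod f) = N.map (f.prod g) := by
    ext x
    simp only [mem_map, MonoidHom.prod_apply]
    exact exists_congr fun n => and_congr_right fun hn => by rw [hfg n (hNH hn)]
  set M := N.map (f.prod g)
  have hL : P (normalizer (M : Set (K × K)) ⧸ M.subgroupOf (normalizer (M : Set (K × K)))) :=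
    hquot _ _ _ (mk'_surjective _) (hsub _ _ (hprod _ _ hK hK))
  have hagree := ha _ hL (quotientMapNormalizer N (f.prod f) hfgN)
    (quotientMapNormalizer N (f.prod g) rfl) (by
      rintro _ ⟨h, hh, rfl⟩
      rw [mk'_apply, quotientMapNormalizer_mk_eq_iff, MonoidHom.prod_apply, MonoidHom.prod_apply,
        hfg h hh, inv_mul_cancel]
      exact one_mem M)
  obtain ⟨n, hn, hna⟩ := mem_map.1 ((quotientMapNormalizer_mk_eq_iff N _ _ a a).1 hagree)
  have hfn : f n = (f a)⁻¹ * f a := congrArg Prod.fst hna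
  have hgn : f n = (f a)⁻¹ * g a := hfg n (hNH hn) ▸ congrArg Prod.snd hna
  exact mul_left_cancel (hfn.symm.trans hgn)

end Dominion

theorem dominion_quotient_general {G : Type u} [Group G]
    (P : (K : Type u) → [Group K] → Prop)
    (hsub : ∀ (A : Type u) [Group A] (B : Subgroup A), P A → P B)
    (hquot : ∀ (A B : Type u) [Group A] [Group B] (φ : A →* B),
      Function.Surjective φ → P A → P B)
    (hprod : ∀ (A B : Type u) [Group A] [Group B], P A → P B → P (A × B))
    (H : Subgroup G) (N : Subgroup G) [N.Normal] (hNH : N ≤ H) :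
    dominion P (H.map (QuotientGroup.mk' N)) =
      (QuotientGroup.mk' N) '' (dominion P H) := by
  refine Set.Subset.antisymm (fun x hx => ?_) (image_dominion_subset _ H)
  obtain ⟨a, rfl⟩ := mk'_surjective N x
  exact ⟨a, mem_dominion_of_mk_mem_dominion hsub hquot hprod hNH hx, rfl⟩

/-- If the class `P` is closed under subgroups, quotients and binary direct
products, `G ∈ P`, `H` is a subgroup of `G`, and `N` is a normal subgroup of
`G` contained in `H`, then the dominion of `H/N` in `G/N` is the image of the
dominion of `H` in `G` under the canonical projection `G → G/N`. -/
theorem dominion_quotient {G : Type u} [Group G]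
    (P : (K : Type u) → [Group K] → Prop)
    (hsub : ∀ (A : Type u) [Group A] (B : Subgroup A), P A → P B)
    (hquot : ∀ (A B : Type u) [Group A] [Group B] (φ : A →* B),
      Function.Surjective φ → P A → P B)
    (hprod : ∀ (A B : Type u) [Group A] [Group B], P A → P B → P (A × B))
    (hG : P G) (H : Subgroup G) (N : Subgroup G) [N.Normal] (hNH : N ≤ H) :
    dominion P (H.map (QuotientGroup.mk' N)) =
      (QuotientGroup.mk' N) '' (dominion P H) :=
  dominion_quotient_general P hsub hquot hprod H N hNH
end

section
/- Let F be the relatively free nilpotent group of class two of rank two, with free generators x and y, and let n > 1 be an integer. Let H be the subgroup of F generated by xⁿ and yⁿ. Then [x,y]ⁿ lies in dom_F^{𝒩₂}(H) but [x,y]ⁿ does not lie in H. -/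
universe u v

/-- The commutator `[a,b] = a⁻¹b⁻¹ab`. -/
def commElem {G : Type v} [Group G] (a b : G) : G := a⁻¹ * b⁻¹ * a * b

/-- The class `𝒩₂` of nilpotent groups of class at most two: those groups whose
third lower central series term (`lowerCentralSeries K 2` in Mathlib's indexing)
is trivial. -/
def NilTwo (K : Type u) [Group K] : Prop := (⊤ : Subgroup K).lowerCentralSeries 2 = ⊥

/-- The relatively free nilpotent group of class two of rank two: the quotient of
the free group on two generators by the third term of its lower central series. -/
abbrev FreeNilTwo : Type := FreeGroup (Fin 2) ⧸ (⊤ : Subgroup (FreeGroup (Fin 2))).lowerCentralSeries 2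

/-!
In a group of class two the commutator is bilinear, so `[a, b]ⁿ = [aⁿ, b] = [a, bⁿ]`; hence two
homomorphisms into such a group that agree on `aⁿ` and `bⁿ` agree on `[a, b]ⁿ`.
To see `[x, y]ⁿ ∉ ⟨xⁿ, yⁿ⟩`, map `F` to the integer Heisenberg group: there `xⁿ` and `yⁿ` lie in
the image of the dilation `⟨a, b, c⟩ ↦ ⟨n a, n b, n² c⟩`, while `[x, y]ⁿ` goes to `⟨0, 0, n⟩`.
-/

open scoped commutatorElement

section commElem

variable {G : Type*} [Group G]

theorem commElem_eq_commutatorElement (a b : G) : commElem a b = ⁅a⁻¹, b⁻¹⁆ := by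
  simp [commElem, commutatorElement_def]

theorem map_commElem {K : Type*} [Group K] (f : G →* K) (a b : G) :
    f (commElem a b) = commElem (f a) (f b) := by
  simp [commElem]

theorem commElem_mul_left (a b c : G) :
    commElem (a * b) c = b⁻¹ * commElem a c * b * commElem b c := by
  simp only [commElem]; group

theorem commElem_mul_right (a b c : G) :
    commElem a (b * c) = commElem a c * (c⁻¹ * commElem a b * c) := by
  simp only [commElem]; group

theorem commElem_pow_left {u w : G} (h : Commute (commElem u w) u) (n : ℕ) :
    commElem (u ^ n) w = commElem u w ^ n := by
  induction n with
  | zero => simp [commElem]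
  | succ k ih =>
    rw [pow_succ', commElem_mul_left, ih, mul_assoc _ _ (u ^ k), (h.pow_right k).eq,
      inv_mul_cancel_left, pow_succ']

theorem commElem_pow_right {u w : G} (h : Commute (commElem u w) w) (n : ℕ) :
    commElem u (w ^ n) = commElem u w ^ n := by
  induction n with
  | zero => simp [commElem]
  | succ k ih =>
    rw [pow_succ, commElem_mul_right, ih, mul_assoc _ _ w, (h.pow_left k).eq,
      inv_mul_cancel_left, pow_succ']

end commElem

namespace NilTwo

variable {K : Type*} [Group K]

theorem commute_commElem (hK : NilTwo K) (a b c : K) : Commute (commElem a b) c := by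
  have hab : commElem a b ∈ (⊤ : Subgroup K).lowerCentralSeries 1 := by
    rw [commElem_eq_commutatorElement]
    exact Subgroup.commutator_mem_commutator (Subgroup.mem_top _) (Subgroup.mem_top _)
  have habc : ⁅commElem a b, c⁆ ∈ (⊤ : Subgroup K).lowerCentralSeries 2 :=
    Subgroup.commutator_mem_commutator hab (Subgroup.mem_top c)
  rw [hK, Subgroup.mem_bot] at habc
  exact commutatorElement_eq_one_iff_commute.mp habc

theorem of_commutator_le_center (h : commutator K ≤ Subgroup.center K) : NilTwo K :=
  Subgroup.lowerCentralSeries_succ_eq_bot _ h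

theorem map_commElem_pow_eq {G : Type*} [Group G] (hK : NilTwo K) {f g : G →* K} {a b : G}
    {n : ℕ} (ha : f (a ^ n) = g (a ^ n)) (hb : f (b ^ n) = g (b ^ n)) :
    f (commElem a b ^ n) = g (commElem a b ^ n) := by
  simp only [map_pow, map_commElem] at ha hb ⊢
  calc commElem (f a) (f b) ^ n
      = commElem (f a ^ n) (f b) := (commElem_pow_left (hK.commute_commElem ..) n).symm
    _ = commElem (g a) (f b) ^ n := by rw [ha, commElem_pow_left (hK.commute_commElem ..)]
    _ = commElem (g a) (f b ^ n) := (commElem_pow_right (hK.commute_commElem ..) n).symm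
    _ = commElem (g a) (g b) ^ n := by rw [hb, commElem_pow_right (hK.commute_commElem ..)]

theorem lowerCentralSeries_two_le_ker {G : Type*} [Group G] (hK : NilTwo K) (f : G →* K) :
    (⊤ : Subgroup G).lowerCentralSeries 2 ≤ f.ker := by
  rw [← Subgroup.map_eq_bot_iff, Subgroup.map_lowerCentralSeries, eq_bot_iff, ← hK]
  exact Subgroup.lowerCentralSeries_mono 2 le_top

end NilTwo

theorem commElem_pow_mem_dominion {G : Type*} [Group G] (a b : G) (n : ℕ) :
    commElem a b ^ n ∈ dominion NilTwo (Subgroup.closure {a ^ n, b ^ n}) :=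
  fun _ _ hK _ _ hfg => hK.map_commElem_pow_eq
    (hfg _ (Subgroup.subset_closure (Set.mem_insert _ _)))
    (hfg _ (Subgroup.subset_closure (Set.mem_insert_of_mem _ rfl)))

namespace FreeNilTwo

def lift {K : Type*} [Group K] (hK : NilTwo K) (v : Fin 2 → K) : FreeNilTwo →* K :=
  QuotientGroup.lift _ (FreeGroup.lift v) (hK.lowerCentralSeries_two_le_ker _)

@[simp]
theorem lift_mk_of {K : Type*} [Group K] (hK : NilTwo K) (v : Fin 2 → K) (i : Fin 2) :
    lift hK v (QuotientGroup.mk (FreeGroup.of i)) = v i := by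
  rw [lift, QuotientGroup.lift_mk, FreeGroup.lift_apply_of]

end FreeNilTwo

/-- The Heisenberg group over `R`: `⟨a, b, c⟩` is the unitriangular matrix
`[[1, a, c], [0, 1, b], [0, 0, 1]]`. -/
@[ext]
structure Heisenberg (R : Type*) where
  a : R
  b : R
  c : R

namespace Heisenberg

variable {R : Type*} [CommRing R]

instance : Mul (Heisenberg R) := ⟨fun g h => ⟨g.a + h.a, g.b + h.b, g.c + h.c + g.a * h.b⟩⟩
instance : One (Heisenberg R) := ⟨⟨0, 0, 0⟩⟩
instance : Inv (Heisenberg R) := ⟨fun g => ⟨-g.a, -g.b, g.a * g.b - g.c⟩⟩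

theorem mul_def (g h : Heisenberg R) :
    g * h = ⟨g.a + h.a, g.b + h.b, g.c + h.c + g.a * h.b⟩ := rfl
theorem one_def : (1 : Heisenberg R) = ⟨0, 0, 0⟩ := rfl
theorem inv_def (g : Heisenberg R) : g⁻¹ = ⟨-g.a, -g.b, g.a * g.b - g.c⟩ := rfl

instance : Group (Heisenberg R) where
  mul_assoc g h k := by ext <;> simp only [mul_def] <;> ring
  one_mul g := by ext <;> simp only [mul_def, one_def] <;> ring
  mul_one g := by ext <;> simp only [mul_def, one_def] <;> ring
  inv_mul_cancel g := by ext <;> simp only [mul_def, inv_def, one_def] <;> ring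

theorem commutator_mem_center (g h : Heisenberg R) :
    ⁅g, h⁆ ∈ Subgroup.center (Heisenberg R) := by
  rw [Subgroup.mem_center_iff]
  intro k
  ext <;> simp only [commutatorElement_def, mul_def, inv_def] <;> ring

theorem nilTwo : NilTwo (Heisenberg R) :=
  NilTwo.of_commutator_le_center <| Subgroup.commutator_le.mpr fun g _ h _ =>
    commutator_mem_center g h

def X : Heisenberg R := ⟨1, 0, 0⟩
def Y : Heisenberg R := ⟨0, 1, 0⟩

theorem X_pow (n : ℕ) : (X : Heisenberg R) ^ n = ⟨n, 0, 0⟩ := by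
  induction n with
  | zero => ext <;> simp [one_def]
  | succ k ih => rw [pow_succ, ih]; ext <;> simp [mul_def, X]

theorem Y_pow (n : ℕ) : (Y : Heisenberg R) ^ n = ⟨0, n, 0⟩ := by
  induction n with
  | zero => ext <;> simp [one_def]
  | succ k ih => rw [pow_succ, ih]; ext <;> simp [mul_def, Y]

theorem commElem_X_Y_pow (n : ℕ) : commElem (X : Heisenberg R) Y ^ n = ⟨0, 0, n⟩ := by
  induction n with
  | zero => ext <;> simp [one_def]
  | succ k ih => rw [pow_succ, ih]; ext <;> simp [commElem, mul_def, inv_def, X, Y]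

def dilate (t : R) : Heisenberg R →* Heisenberg R where
  toFun g := ⟨t * g.a, t * g.b, t ^ 2 * g.c⟩
  map_one' := by ext <;> simp [one_def]
  map_mul' g h := by ext <;> simp only [mul_def] <;> ring

theorem commElem_X_Y_pow_notMem_closure {n : ℕ} (hn : 1 < n) :
    commElem (X : Heisenberg ℤ) Y ^ n ∉ Subgroup.closure {X ^ n, Y ^ n} := by
  intro hmem
  have hle : Subgroup.closure {(X : Heisenberg ℤ) ^ n, Y ^ n} ≤ (dilate (n : ℤ)).range := by
    rw [Subgroup.closure_le]
    rintro _ (rfl | rfl)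
    · exact ⟨X, by rw [X_pow]; ext <;> simp [dilate, X]⟩
    · exact ⟨Y, by rw [Y_pow]; ext <;> simp [dilate, Y]⟩
  obtain ⟨g, hg⟩ := hle hmem
  have hc : (n : ℤ) * (n * g.c) = n * 1 := by
    simpa [dilate, commElem_X_Y_pow, sq, mul_assoc] using congrArg Heisenberg.c hg
  have hn_one := Int.eq_one_of_mul_eq_one_right (Int.natCast_nonneg n)
    (mul_left_cancel₀ (by positivity) hc)
  omega

end Heisenberg

/-- In the relatively free nilpotent group of class two of rank two, freely
generated by `x` and `y`, for any integer `n > 1`, the element `[x,y]ⁿ` lies in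
the `𝒩₂`-dominion of the subgroup `H = ⟨xⁿ, yⁿ⟩`, but `[x,y]ⁿ ∉ H`. -/
theorem dominion_nontrivial_nilTwo (n : ℕ) (hn : 1 < n) :
    let x : FreeNilTwo := QuotientGroup.mk (FreeGroup.of 0)
    let y : FreeNilTwo := QuotientGroup.mk (FreeGroup.of 1)
    let H : Subgroup FreeNilTwo := Subgroup.closure {x ^ n, y ^ n}
    (commElem x y) ^ n ∈ dominion NilTwo H ∧ (commElem x y) ^ n ∉ H := by
  intro x y H
  refine ⟨commElem_pow_mem_dominion x y n, fun hmem => ?_⟩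
  let φ := FreeNilTwo.lift (Heisenberg.nilTwo (R := ℤ)) ![Heisenberg.X, Heisenberg.Y]
  have himage := Subgroup.mem_map_of_mem φ hmem
  rw [MonoidHom.map_closure, Set.image_pair] at himage
  simp only [φ, map_pow, map_commElem, x, y, FreeNilTwo.lift_mk_of] at himage
  exact Heisenberg.commElem_X_Y_pow_notMem_closure hn himage
end

section
/- Let G be a group such that for all x, y ∈ G one has [x⁻¹, y] = [x, y]⁻¹ = [x, y⁻¹]. Then G satisfies the 2-Engel identity: [[x, y], y] = e for all x, y ∈ G. -/
universe v

/-- If a group `G` satisfies `[x⁻¹,y] = [x,y]⁻¹ = [x,y⁻¹]` for all `x, y`,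
then `G` is 2-Engel: `[[x,y],y] = e` for all `x, y ∈ G`. -/
theorem engel_of_comm_inv {G : Type v} [Group G]
    (h : ∀ x y : G, commElem x⁻¹ y = (commElem x y)⁻¹ ∧
      (commElem x y)⁻¹ = commElem x y⁻¹) :
    ∀ x y : G, commElem (commElem x y) y = 1 := by
  intro x y
  have h2 := (h x y).2
  simp only [commElem] at h2 ⊢
  set c : G := x⁻¹ * y⁻¹ * x * y with hc_def
  -- [x,y⁻¹] = y * c⁻¹ * y⁻¹, so h2 says c⁻¹ = y * c⁻¹ * y⁻¹
  have h2' : c⁻¹ = y * c⁻¹ * y⁻¹ := by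
    conv_lhs => rw [h2]
    rw [hc_def]; group
  -- hence c = y * c * y⁻¹, i.e. y commutes with c
  have hcomm : c * y = y * c := by
    have := congrArg (fun g : G => (y⁻¹ * g * y)⁻¹) h2'
    simp only [mul_inv_rev, inv_inv] at this
    calc c * y = y * (y⁻¹ * c⁻¹⁻¹ * y) := by group
      _ = y * (y⁻¹ * (y * c⁻¹ * y⁻¹)⁻¹ * y) := by rw [← h2']
      _ = y * c := by group
  calc c⁻¹ * y⁻¹ * c * y = c⁻¹ * y⁻¹ * (c * y) := by group
    _ = c⁻¹ * y⁻¹ * (y * c) := by rw [hcomm]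
    _ = 1 := by group
end
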